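/- Define s(R,S) = max{s⁺(R,S), s⁺(S,R)} and t(R,S) = √s(R,S) for unbounded subsets R, S of a metric space X. Then t is a pseudometric on the set of unbounded subsets of X taking values in [0,1]; in particular t satisfies the triangle inequality t(R,T) ≤ t(R,S) + t(S,T). -/
import Mathlib


open Metric Set Bornology Filter

def cone {X : Type*} [MetricSpace X] (o : X) (R : Set X) (α a : ℝ) : Set X :=
  ⋃ x ∈ R, Metric.closedBall x (α * dist o x + a)

noncomputable def sPlus {X : Type*} [MetricSpace X] (o : X) (R S : Set X) : ℝ :=
  sInf {α : ℝ | 0 ≤ α ∧ ∃ a : ℝ, 0 ≤ a ∧ S ⊆ cone o R α a}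

noncomputable def sFun {X : Type*} [MetricSpace X] (o : X) (R S : Set X) : ℝ :=
  max (sPlus o R S) (sPlus o S R)

noncomputable def tFun {X : Type*} [MetricSpace X] (o : X) (R S : Set X) : ℝ :=
  Real.sqrt (sFun o R S)

section Aux

variable {X : Type*} [MetricSpace X] (o : X)

def Pset (R S : Set X) : Set ℝ :=
  {α : ℝ | 0 ≤ α ∧ ∃ a : ℝ, 0 ≤ a ∧ S ⊆ cone o R α a}

lemma sPlus_eq (R S : Set X) : sPlus o R S = sInf (Pset o R S) := rfl

lemma bddBelow_Pset (R S : Set X) : BddBelow (Pset o R S) :=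
  ⟨0, fun _ hx => hx.1⟩

lemma sPlus_nonneg (R S : Set X) : 0 ≤ sPlus o R S :=
  Real.sInf_nonneg fun _ hx => hx.1

lemma cone_mono {R : Set X} {α a α' a' : ℝ} (hα : α ≤ α') (ha : a ≤ a') :
    cone o R α a ⊆ cone o R α' a' := by
  intro y hy
  simp only [cone, mem_iUnion, exists_prop] at hy ⊢
  obtain ⟨x, hx, hy⟩ := hy
  refine ⟨x, hx, ?_⟩
  rw [mem_closedBall] at hy ⊢
  have := mul_le_mul_of_nonneg_right hα (dist_nonneg (x := o) (y := x))
  linarith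

lemma Pset_up {R S : Set X} {α α' : ℝ} (h : α ∈ Pset o R S) (hle : α ≤ α') :
    α' ∈ Pset o R S := by
  obtain ⟨h0, a, ha, hsub⟩ := h
  exact ⟨h0.trans hle, a, ha, hsub.trans (cone_mono o hle le_rfl)⟩

lemma exists_far {R : Set X} (hR : ¬ IsBounded R) (c : ℝ) : ∃ x ∈ R, c ≤ dist o x := by
  by_contra h
  push_neg at h
  refine hR ((Metric.isBounded_iff_subset_closedBall o).2 ⟨c, fun x hx => ?_⟩)
  rw [mem_closedBall, dist_comm]
  exact (h x hx).le

lemma one_add_mem {R : Set X} (S : Set X) (hR : ¬ IsBounded R) {ε : ℝ} (hε : 0 < ε) :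
    (1 + ε) ∈ Pset o R S := by
  refine ⟨by linarith, 0, le_refl 0, fun y hy => ?_⟩
  obtain ⟨x, hx, hxd⟩ := exists_far o hR (dist o y / ε)
  simp only [cone, mem_iUnion, exists_prop]
  refine ⟨x, hx, mem_closedBall.2 ?_⟩
  have h1 : dist o y ≤ ε * dist o x := by
    rw [div_le_iff₀ hε] at hxd
    linarith
  calc dist y x ≤ dist y o + dist o x := dist_triangle _ _ _
    _ ≤ ε * dist o x + dist o x := by rw [dist_comm y o]; linarith
    _ = (1 + ε) * dist o x + 0 := by ring

lemma Pset_nonempty {R : Set X} (S : Set X) (hR : ¬ IsBounded R) :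
    (Pset o R S).Nonempty :=
  ⟨1 + 1, one_add_mem o S hR one_pos⟩

lemma sPlus_le_one {R : Set X} (S : Set X) (hR : ¬ IsBounded R) : sPlus o R S ≤ 1 := by
  refine le_of_forall_pos_le_add fun ε hε => ?_
  exact csInf_le (bddBelow_Pset o R S) (one_add_mem o S hR hε)

lemma sPlus_add_mem {R : Set X} (S : Set X) (hR : ¬ IsBounded R) {ε : ℝ} (hε : 0 < ε) :
    sPlus o R S + ε ∈ Pset o R S := by
  obtain ⟨α, hα, hlt⟩ := Real.lt_sInf_add_pos (Pset_nonempty o S hR) hε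
  exact Pset_up o hα hlt.le

lemma comp_mem {R S T : Set X} {α β : ℝ} (hα : α ∈ Pset o R S) (hβ : β ∈ Pset o S T) :
    α + β + α * β ∈ Pset o R T := by
  obtain ⟨hα0, a, ha0, hSa⟩ := hα
  obtain ⟨hβ0, b, hb0, hTb⟩ := hβ
  refine ⟨by positivity, a * (1 + β) + b, by positivity, fun t ht => ?_⟩
  have ht' := hTb ht
  simp only [cone, mem_iUnion, exists_prop, mem_closedBall] at ht'
  obtain ⟨s, hs, hts⟩ := ht'
  have hs' := hSa hs
  simp only [cone, mem_iUnion, exists_prop, mem_closedBall] at hs'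
  obtain ⟨r, hr, hsr⟩ := hs'
  simp only [cone, mem_iUnion, exists_prop, mem_closedBall]
  refine ⟨r, hr, ?_⟩
  have hos : dist o s ≤ (1 + α) * dist o r + a := by
    have := dist_triangle o r s
    rw [dist_comm r s] at this
    nlinarith [dist_nonneg (x := o) (y := r)]
  have h2 : β * dist o s ≤ β * ((1 + α) * dist o r + a) :=
    mul_le_mul_of_nonneg_left hos hβ0
  calc dist t r ≤ dist t s + dist s r := dist_triangle _ _ _
    _ ≤ (β * dist o s + b) + (α * dist o r + a) := add_le_add hts hsr
    _ ≤ (α + β + α * β) * dist o r + (a * (1 + β) + b) := by nlinarith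

lemma sPlus_triangle {R S T : Set X} (hR : ¬ IsBounded R) (hS : ¬ IsBounded S) :
    sPlus o R T ≤ sPlus o R S + sPlus o S T + sPlus o R S * sPlus o S T := by
  set s1 := sPlus o R S
  set s2 := sPlus o S T
  have key : ∀ ε > (0:ℝ), sPlus o R T ≤ (s1 + ε) + (s2 + ε) + (s1 + ε) * (s2 + ε) :=
    fun ε hε => csInf_le (bddBelow_Pset o R T)
      (comp_mem o (sPlus_add_mem o S hR hε) (sPlus_add_mem o T hS hε))
  have hcont : Tendsto (fun ε : ℝ => (s1 + ε) + (s2 + ε) + (s1 + ε) * (s2 + ε))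
      (nhdsWithin 0 (Ioi 0)) (nhds (s1 + s2 + s1 * s2)) := by
    have : ContinuousAt (fun ε : ℝ => (s1 + ε) + (s2 + ε) + (s1 + ε) * (s2 + ε)) 0 := by
      fun_prop
    have h : Tendsto (fun ε : ℝ => (s1 + ε) + (s2 + ε) + (s1 + ε) * (s2 + ε))
        (nhdsWithin (0:ℝ) (Ioi 0))
        (nhds ((s1 + 0) + (s2 + 0) + (s1 + 0) * (s2 + 0))) :=
      this.tendsto.mono_left nhdsWithin_le_nhds
    simpa using h
  exact ge_of_tendsto hcont (eventually_of_mem self_mem_nhdsWithin fun ε hε => key ε hε)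

lemma sFun_nonneg (R S : Set X) : 0 ≤ sFun o R S :=
  le_max_of_le_left (sPlus_nonneg o R S)

lemma sFun_le_one {R S : Set X} (hR : ¬ IsBounded R) (hS : ¬ IsBounded S) :
    sFun o R S ≤ 1 :=
  max_le (sPlus_le_one o S hR) (sPlus_le_one o R hS)

lemma sFun_comm (R S : Set X) : sFun o R S = sFun o S R := max_comm _ _

lemma sFun_triangle {R S T : Set X} (hR : ¬ IsBounded R) (hS : ¬ IsBounded S)
    (hT : ¬ IsBounded T) :
    sFun o R T ≤ sFun o R S + sFun o S T + sFun o R S * sFun o S T := by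
  have h1 : sPlus o R S ≤ sFun o R S := le_max_left _ _
  have h2 : sPlus o S R ≤ sFun o R S := le_max_right _ _
  have h3 : sPlus o S T ≤ sFun o S T := le_max_left _ _
  have h4 : sPlus o T S ≤ sFun o S T := le_max_right _ _
  have hn1 := sPlus_nonneg o R S
  have hn2 := sPlus_nonneg o S R
  have hn3 := sPlus_nonneg o S T
  have hn4 := sPlus_nonneg o T S
  refine max_le ?_ ?_
  · calc sPlus o R T ≤ sPlus o R S + sPlus o S T + sPlus o R S * sPlus o S T :=
        sPlus_triangle o hR hS
      _ ≤ sFun o R S + sFun o S T + sFun o R S * sFun o S T := by nlinarith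
  · calc sPlus o T R ≤ sPlus o T S + sPlus o S R + sPlus o T S * sPlus o S R :=
        sPlus_triangle o hT hS
      _ ≤ sFun o R S + sFun o S T + sFun o R S * sFun o S T := by nlinarith

lemma sFun_self (R : Set X) : sFun o R R = 0 := by
  have h0 : (0:ℝ) ∈ Pset o R R := by
    refine ⟨le_refl 0, 0, le_refl 0, fun x hx => ?_⟩
    simp only [cone, mem_iUnion, exists_prop, mem_closedBall]
    exact ⟨x, hx, by simp⟩
  have : sPlus o R R ≤ 0 := csInf_le (bddBelow_Pset o R R) h0
  have h := le_antisymm this (sPlus_nonneg o R R)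
  simp [sFun, h]

end Aux

theorem stmt5 {X : Type*} [MetricSpace X] (o : X) :
    (∀ R : Set X, ¬ Bornology.IsBounded R → tFun o R R = 0) ∧
    (∀ R S : Set X, ¬ Bornology.IsBounded R → ¬ Bornology.IsBounded S →
      0 ≤ tFun o R S ∧ tFun o R S ≤ 1 ∧ tFun o R S = tFun o S R) ∧
    (∀ R S T : Set X, ¬ Bornology.IsBounded R → ¬ Bornology.IsBounded S →
      ¬ Bornology.IsBounded T → tFun o R T ≤ tFun o R S + tFun o S T) := by
  refine ⟨fun R _ => ?_, fun R S hR hS => ?_, fun R S T hR hS hT => ?_⟩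
  · simp [tFun, sFun_self]
  · refine ⟨Real.sqrt_nonneg _, ?_, by rw [tFun, tFun, sFun_comm]⟩
    rw [tFun, show (1:ℝ) = Real.sqrt 1 by simp]
    exact Real.sqrt_le_sqrt (sFun_le_one o hR hS)
  · set u := sFun o R S with hu
    set v := sFun o S T with hv
    have hun : 0 ≤ u := sFun_nonneg o R S
    have hvn : 0 ≤ v := sFun_nonneg o S T
    have hu1 : u ≤ 1 := sFun_le_one o hR hS
    have hv1 : v ≤ 1 := sFun_le_one o hS hT
    have htri : sFun o R T ≤ u + v + u * v := sFun_triangle o hR hS hT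
    have huv : u * v ≤ Real.sqrt (u * v) := by
      have h1 : u * v ≤ 1 := by nlinarith
      have h2 : (u * v) * (u * v) ≤ u * v := by nlinarith [mul_nonneg hun hvn]
      calc u * v = Real.sqrt ((u * v) * (u * v)) := by
            rw [Real.sqrt_mul_self (by positivity)]
        _ ≤ Real.sqrt (u * v) := Real.sqrt_le_sqrt h2
    have hsq : Real.sqrt (u * v) = Real.sqrt u * Real.sqrt v := Real.sqrt_mul hun v
    have hkey : sFun o R T ≤ (Real.sqrt u + Real.sqrt v) ^ 2 := by
      have e1 : Real.sqrt u ^ 2 = u := Real.sq_sqrt hun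
      have e2 : Real.sqrt v ^ 2 = v := Real.sq_sqrt hvn
      have : (Real.sqrt u + Real.sqrt v) ^ 2 = u + v + 2 * (Real.sqrt u * Real.sqrt v) := by
        ring_nf
        nlinarith [e1, e2]
      rw [this, ← hsq]
      nlinarith
    calc tFun o R T = Real.sqrt (sFun o R T) := rfl
      _ ≤ Real.sqrt ((Real.sqrt u + Real.sqrt v) ^ 2) := Real.sqrt_le_sqrt hkey
      _ = Real.sqrt u + Real.sqrt v := Real.sqrt_sq (by positivity)
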